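/- arXiv:1005.3606 — 2 statements merged into one kernel-verified Lean document; each statement's English description precedes it below -/
import Mathlib

section
/- Let $p > 2$, $N \ge 1$, $R > R_0 > 0$, and define $\sigma(r) := \frac{p-1}{p}\left(e^{pR/(p-1)} - e^{pr/(p-1)}\right)$ for $r \in [0, R]$. If $A \ge \left(\frac{e^{pR/(p-1)}}{(p-1)(p-2)}\right)^{1/(p-2)}$, then for all $r \in (0, R]$: $A\left[A^{p-2}\left(p - 1 + \frac{N-1}{r}\right) e^{pr} - \frac{\sigma(r)}{p-2}\right] \ge A\left((p-1) A^{p-2} - \frac{e^{pR/(p-1)}}{p-2}\right) \ge 0$. -/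
theorem stmt_9 (p : ℝ) (N : ℕ) (R R₀ A : ℝ) (hp : 2 < p) (hN : 1 ≤ N)
    (hR₀ : 0 < R₀) (hR : R₀ < R)
    (σ : ℝ → ℝ)
    (hσ : ∀ r, σ r = (p - 1) / p * (Real.exp (p * R / (p - 1)) - Real.exp (p * r / (p - 1))))
    (hA : (Real.exp (p * R / (p - 1)) / ((p - 1) * (p - 2))) ^ (1 / (p - 2)) ≤ A) :
    ∀ r : ℝ, 0 < r → r ≤ R →
      A * ((p - 1) * A ^ (p - 2) - Real.exp (p * R / (p - 1)) / (p - 2)) ≤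
        A * (A ^ (p - 2) * (p - 1 + ((N : ℝ) - 1) / r) * Real.exp (p * r) - σ r / (p - 2)) ∧
      0 ≤ A * ((p - 1) * A ^ (p - 2) - Real.exp (p * R / (p - 1)) / (p - 2)) := by
  intro r hr hrR
  set E := Real.exp (p * R / (p - 1)) with hE
  have hEpos : 0 < E := Real.exp_pos _
  have hp2 : (0:ℝ) < p - 2 := by linarith
  have hp1 : (0:ℝ) < p - 1 := by linarith
  have hxpos : 0 < E / ((p - 1) * (p - 2)) := by positivity
  have hApos : 0 < A := lt_of_lt_of_le (Real.rpow_pos_of_pos hxpos _) hA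
  have hA2 : E / ((p - 1) * (p - 2)) ≤ A ^ (p - 2) := by
    have h := Real.rpow_le_rpow (le_of_lt (Real.rpow_pos_of_pos hxpos _)) hA hp2.le
    rwa [← Real.rpow_mul hxpos.le, one_div_mul_cancel hp2.ne',
      Real.rpow_one] at h
  have hBpos : 0 < A ^ (p - 2) := Real.rpow_pos_of_pos hApos _
  have hkey : 0 ≤ (p - 1) * A ^ (p - 2) - E / (p - 2) := by
    have : E / (p - 2) = (p - 1) * (E / ((p - 1) * (p - 2))) := by
      field_simp
    rw [this]
    nlinarith [mul_le_mul_of_nonneg_left hA2 hp1.le]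
  constructor
  · apply mul_le_mul_of_nonneg_left _ hApos.le
    have hc : 0 ≤ ((N : ℝ) - 1) / r := by
      apply div_nonneg _ hr.le
      have : (1:ℝ) ≤ (N:ℝ) := by exact_mod_cast hN
      linarith
    have he : 1 ≤ Real.exp (p * r) := by
      apply Real.one_le_exp
      positivity
    have hσr : σ r ≤ E := by
      rw [hσ r]
      have h1 : 0 < Real.exp (p * r / (p - 1)) := Real.exp_pos _
      rw [div_mul_eq_mul_div, div_le_iff₀ (by linarith : (0:ℝ) < p)]
      nlinarith [mul_pos hp1 h1]
    have hσd : σ r / (p - 2) ≤ E / (p - 2) := by gcongr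
    nlinarith [mul_nonneg (mul_nonneg hBpos.le hc) (Real.exp_pos (p*r)).le,
      mul_nonneg (mul_nonneg hBpos.le hp1.le) (by linarith : (0:ℝ) ≤ Real.exp (p*r) - 1)]
  · positivity
end

section
/- Let $p > 2$, $\gamma \in (0,1)$ with $\gamma \le \frac{p-2}{p-1}$, and let $f : \mathbb{R} \to \mathbb{R}$ be a positive $C^2$ function satisfying $-(|f'|^{p-2} f')' - |f'|^{p-1} - \frac{f}{p-2} = 0$ on an open interval $I$. Then $g := f^{\gamma}$ satisfies, classically on $I$, $-(|g'|^{p-2} g')' - \frac{(1-\gamma)(p-1)}{\gamma} \frac{|g'|^{p}}{g} - |g'|^{p-1} - \frac{\gamma^{p-1}}{p-2}\, g^{(1 - (1-\gamma)(p-1))/\gamma} = 0$. -/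
/-!
Put `c = γ f^(γ-1)`, so that `g' = c f'`. Since the flux `φ_p(s) = |s|^(p-2) s` is positively
homogeneous of degree `p - 1`, the flux of `g` is the flux of `f` times the weight
`c^(p-1) = γ^(p-1) f^E` with `E = (γ-1)(p-1)`. Differentiating this product, the term coming from
the weight is `E f' φ_p(f') / f = E |f'|^p / f` (times the weight), and it is cancelled exactly by
the gradient term `(1-γ)(p-1)/γ · |g'|^p / g`. What remains is the weight times the equation
for `f`: the residual of `g` is a positive multiple of the residual of `f`.
-/

open Real

noncomputable def pFlux (p s : ℝ) : ℝ := |s| ^ (p - 2) * s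

lemma pFlux_neg (p s : ℝ) : pFlux p (-s) = -pFlux p s := by
  simp [pFlux]

lemma pFlux_zero (p : ℝ) : pFlux p 0 = 0 := by
  simp [pFlux]

lemma pFlux_of_pos {p s : ℝ} (hs : 0 < s) : pFlux p s = s ^ (p - 1) := by
  rw [pFlux, abs_of_pos hs, ← rpow_add_one hs.ne']
  ring_nf

lemma mul_pFlux_self {p : ℝ} (hp : p ≠ 0) (s : ℝ) : s * pFlux p s = |s| ^ p := by
  calc s * pFlux p s = |s| ^ (p - 2) * |s| ^ (2 : ℝ) := by rw [pFlux, rpow_two, sq_abs]; ring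
    _ = |s| ^ p := by rw [← rpow_add' (abs_nonneg s) (by simpa)]; ring_nf

lemma pFlux_mul_of_pos {p c : ℝ} (hc : 0 < c) (s : ℝ) :
    pFlux p (c * s) = c ^ (p - 1) * pFlux p s := by
  rw [pFlux, pFlux, abs_mul, abs_of_pos hc, mul_rpow hc.le (abs_nonneg s),
    show p - 1 = p - 2 + 1 by ring, rpow_add_one hc.ne']
  ring

lemma hasDerivAt_pFlux_of_pos (p : ℝ) {t : ℝ} (ht : 0 < t) :
    HasDerivAt (pFlux p) ((p - 1) * |t| ^ (p - 2)) t := by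
  have h := (hasDerivAt_id t).rpow_const (p := p - 1) (Or.inl ht.ne')
  rw [abs_of_pos ht]
  refine (h.congr_deriv (by simp only [one_mul, id]; ring_nf)).congr_of_eventuallyEq ?_
  filter_upwards [Ioi_mem_nhds ht] with s hs using pFlux_of_pos hs

lemma hasDerivAt_pFlux_zero {p : ℝ} (hp : 2 < p) : HasDerivAt (pFlux p) 0 0 := by
  rw [hasDerivAt_iff_tendsto_slope_zero]
  have hcont : ContinuousAt (fun t : ℝ => |t| ^ (p - 2)) 0 :=
    (continuousAt_rpow_const _ _ (Or.inr (by linarith))).comp continuous_abs.continuousAt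
  have h0 : |(0 : ℝ)| ^ (p - 2) = 0 := by
    rw [abs_zero, zero_rpow (by linarith)]
  refine (h0 ▸ hcont.tendsto.mono_left nhdsWithin_le_nhds).congr' ?_
  filter_upwards [self_mem_nhdsWithin] with t (ht : t ≠ 0)
  rw [zero_add, pFlux_zero, sub_zero, smul_eq_mul, pFlux]
  field_simp

lemma hasDerivAt_pFlux {p : ℝ} (hp : 2 < p) (t : ℝ) :
    HasDerivAt (pFlux p) ((p - 1) * |t| ^ (p - 2)) t := by
  rcases lt_trichotomy t 0 with ht | rfl | ht
  · have h := ((hasDerivAt_pFlux_of_pos p (neg_pos.2 ht)).comp t (hasDerivAt_neg t)).neg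
    have hodd : -(pFlux p ∘ Neg.neg) = pFlux p := by
      funext s; simp [pFlux_neg]
    rw [hodd, abs_neg] at h
    simpa using h
  · simpa [zero_rpow (by linarith : p - 2 ≠ 0)] using hasDerivAt_pFlux_zero hp
  · exact hasDerivAt_pFlux_of_pos p ht

noncomputable def giantResidual (p : ℝ) (f : ℝ → ℝ) (x : ℝ) : ℝ :=
  -deriv (fun y => pFlux p (deriv f y)) x - |deriv f x| ^ (p - 1) - f x / (p - 2)

noncomputable def powerResidual (p γ : ℝ) (g : ℝ → ℝ) (x : ℝ) : ℝ :=
  -deriv (fun y => pFlux p (deriv g y)) x - (1 - γ) * (p - 1) / γ * (|deriv g x| ^ p / g x)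
    - |deriv g x| ^ (p - 1) - γ ^ (p - 1) / (p - 2) * g x ^ ((1 - (1 - γ) * (p - 1)) / γ)

lemma mul_rpow_sub_one_rpow {γ F : ℝ} (hγ : 0 < γ) (hF : 0 < F) (r : ℝ) :
    (γ * F ^ (γ - 1)) ^ r = γ ^ r * F ^ ((γ - 1) * r) := by
  rw [mul_rpow hγ.le (rpow_nonneg hF.le _), ← rpow_mul hF.le]

lemma deriv_rpow_of_pos {γ : ℝ} {f : ℝ → ℝ} (hpos : ∀ y, 0 < f y) (hf : Differentiable ℝ f)
    (y : ℝ) : deriv (fun y => f y ^ γ) y = γ * f y ^ (γ - 1) * deriv f y :=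
  (deriv_rpow_const (hf y) (Or.inl (hpos y).ne')).trans (by ring)

lemma hasDerivAt_pFlux_deriv_rpow {p γ x : ℝ} {f : ℝ → ℝ} (hp : 2 < p) (hγ : 0 < γ)
    (hpos : ∀ y, 0 < f y) (hf : Differentiable ℝ f) (hf' : DifferentiableAt ℝ (deriv f) x) :
    HasDerivAt (fun y => pFlux p (deriv (fun y => f y ^ γ) y))
      (γ ^ (p - 1) * f x ^ ((γ - 1) * (p - 1)) * ((γ - 1) * (p - 1) * deriv f x / f x *
        pFlux p (deriv f x) + deriv (fun y => pFlux p (deriv f y)) x)) x := by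
  set E := (γ - 1) * (p - 1)
  have hflux : (fun y => pFlux p (deriv (fun y => f y ^ γ) y))
      = fun y => γ ^ (p - 1) * f y ^ E * pFlux p (deriv f y) := by
    funext y
    rw [deriv_rpow_of_pos hpos hf, pFlux_mul_of_pos (by positivity [hpos y]),
      mul_rpow_sub_one_rpow hγ (hpos y)]
  have hweight : HasDerivAt (fun y => γ ^ (p - 1) * f y ^ E)
      (γ ^ (p - 1) * f x ^ E * (E * deriv f x / f x)) x := by
    refine (((hf x).hasDerivAt.rpow_const (Or.inl (hpos x).ne')).const_mul _).congr_deriv ?_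
    rw [rpow_sub_one (hpos x).ne']
    ring
  have hΦ : DifferentiableAt ℝ (fun y => pFlux p (deriv f y)) x :=
    (hasDerivAt_pFlux hp _).differentiableAt.comp x hf'
  rw [hflux]
  exact (hweight.mul hΦ.hasDerivAt).congr_deriv (by ring)

theorem powerResidual_rpow_eq_mul_giantResidual {p γ x : ℝ} {f : ℝ → ℝ} (hp : 2 < p)
    (hγ : 0 < γ) (hpos : ∀ y, 0 < f y) (hf : Differentiable ℝ f)
    (hf' : DifferentiableAt ℝ (deriv f) x) :
    powerResidual p γ (fun y => f y ^ γ) x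
      = γ ^ (p - 1) * f x ^ ((γ - 1) * (p - 1)) * giantResidual p f x := by
  unfold powerResidual giantResidual
  rw [(hasDerivAt_pFlux_deriv_rpow hp hγ hpos hf hf').deriv, deriv_rpow_of_pos hpos hf x]
  set E := (γ - 1) * (p - 1)
  set F := f x
  set D := deriv f x
  have hF : 0 < F := hpos x
  have hc : 0 < γ * F ^ (γ - 1) := by positivity
  have hgrad : |γ * F ^ (γ - 1) * D| ^ p / F ^ γ = γ ^ (p - 1) * F ^ E * (γ / F) * |D| ^ p := by
    rw [abs_mul, abs_of_pos hc, mul_rpow hc.le (abs_nonneg D),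
      ← mul_rpow_sub_one_rpow hγ hF, rpow_sub_one hc.ne', rpow_sub_one hF.ne']
    field_simp
  have hdrift : |γ * F ^ (γ - 1) * D| ^ (p - 1) = γ ^ (p - 1) * F ^ E * |D| ^ (p - 1) := by
    rw [abs_mul, abs_of_pos hc, mul_rpow hc.le (abs_nonneg D), mul_rpow_sub_one_rpow hγ hF]
  have hreaction : (F ^ γ) ^ ((1 - (1 - γ) * (p - 1)) / γ) = F ^ E * F := by
    rw [← rpow_mul hF.le, ← rpow_add_one hF.ne']
    congr 1
    field_simp
    ring
  rw [hgrad, hdrift, hreaction]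
  linear_combination (norm := skip)
    (-(γ ^ (p - 1) * F ^ E * E / F)) * mul_pFlux_self (p := p) (by linarith) D
  field_simp
  ring

theorem stmt_13_general (p γ : ℝ) (hp : 2 < p) (hγ0 : 0 < γ)
    (a b : ℝ) (f : ℝ → ℝ) (hf : ContDiff ℝ 2 f) (hfpos : ∀ x, 0 < f x)
    (hfeq : ∀ x ∈ Set.Ioo a b,
      -(deriv (fun y => |deriv f y| ^ (p - 2) * deriv f y) x)
        - |deriv f x| ^ (p - 1) - f x / (p - 2) = 0)
    (g : ℝ → ℝ) (hg : g = fun x => f x ^ γ) :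
    ∀ x ∈ Set.Ioo a b,
      -(deriv (fun y => |deriv g y| ^ (p - 2) * deriv g y) x)
        - (1 - γ) * (p - 1) / γ * (|deriv g x| ^ p / g x)
        - |deriv g x| ^ (p - 1)
        - γ ^ (p - 1) / (p - 2) * g x ^ ((1 - (1 - γ) * (p - 1)) / γ) = 0 := by
  intro x hx
  subst hg
  have key := powerResidual_rpow_eq_mul_giantResidual hp hγ0 hfpos
    (hf.differentiable two_ne_zero) (hf.differentiable_deriv_two x)
  rw [show giantResidual p f x = 0 from hfeq x hx, mul_zero] at key
  exact key

theorem stmt_13 (p γ : ℝ) (hp : 2 < p) (hγ0 : 0 < γ) (hγ1 : γ < 1)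
    (hγ2 : γ ≤ (p - 2) / (p - 1))
    (a b : ℝ) (f : ℝ → ℝ) (hf : ContDiff ℝ 2 f) (hfpos : ∀ x, 0 < f x)
    (hfeq : ∀ x ∈ Set.Ioo a b,
      -(deriv (fun y => |deriv f y| ^ (p - 2) * deriv f y) x)
        - |deriv f x| ^ (p - 1) - f x / (p - 2) = 0)
    (g : ℝ → ℝ) (hg : g = fun x => f x ^ γ) :
    ∀ x ∈ Set.Ioo a b,
      -(deriv (fun y => |deriv g y| ^ (p - 2) * deriv g y) x)
        - (1 - γ) * (p - 1) / γ * (|deriv g x| ^ p / g x)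
        - |deriv g x| ^ (p - 1)
        - γ ^ (p - 1) / (p - 2) * g x ^ ((1 - (1 - γ) * (p - 1)) / γ) = 0 :=
  stmt_13_general p γ hp hγ0 a b f hf hfpos hfeq g hg
end
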